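/- arXiv:2508.14147 — 2 statements merged into one kernel-verified Lean document; each statement's English description precedes it below -/
import Mathlib

section
/- Let G be a temporal graph and k ≥ 1 an integer. Let [t1,t2] be a minimal core window of some temporal edge such that no temporal edge of G has a minimal core window [t1,t2'] with t2' < t2 (i.e., starting at t1 and ending strictly earlier than t2). Then there exists a temporal edge e with timestamp exactly t1 such that [t1,t2] is a minimal core window of e. -/
variable {V : Type*} [Fintype V]

/-- A vertex set `S` is `k`-dense in `G` if every vertex of `S` has
at least `k` neighbors of `G` lying in `S`. -/
def KDense (G : SimpleGraph V) (k : ℕ) (S : Set V) : Prop :=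
  ∀ v ∈ S, k ≤ (S ∩ G.neighborSet v).ncard

/-- The `k`-core of `G`: the union of all `k`-dense vertex sets. -/
def kCore (G : SimpleGraph V) (k : ℕ) : Set V :=
  ⋃₀ {S | KDense G k S}

/-- A temporal graph on a vertex set `V`: a finite set of temporal edges
`(u, v, t)` with `u ≠ v` and integer timestamp `t`. -/
structure TemporalGraph (V : Type*) where
  E : Finset (V × V × ℤ)
  ne : ∀ e ∈ E, e.1 ≠ e.2.1

/-- The projected (snapshot) graph of `G` over the time window `[ts, te]`. -/
def TemporalGraph.proj (G : TemporalGraph V) (ts te : ℤ) : SimpleGraph V where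
  Adj u v := ∃ t, ts ≤ t ∧ t ≤ te ∧ ((u, v, t) ∈ G.E ∨ (v, u, t) ∈ G.E)
  symm := by
    constructor
    rintro u v ⟨t, h1, h2, h3⟩
    exact ⟨t, h1, h2, h3.symm⟩
  loopless := by
    constructor
    rintro u ⟨t, h1, h2, h3⟩
    rcases h3 with h | h <;> exact G.ne _ h rfl

/-- The temporal `k`-core of the window `[ts, te]`: all temporal edges with
timestamp in `[ts, te]` whose both endpoints lie in the `k`-core of the
projected graph `G_[ts,te]`. -/
def TemporalGraph.tCore (G : TemporalGraph V) (k : ℕ) (ts te : ℤ) :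
    Set (V × V × ℤ) :=
  {e | e ∈ G.E ∧ ts ≤ e.2.2 ∧ e.2.2 ≤ te ∧
    e.1 ∈ kCore (G.proj ts te) k ∧ e.2.1 ∈ kCore (G.proj ts te) k}

/-- `[t1, t2]` is a minimal core window of the temporal edge `e`:
`e` lies in the temporal `k`-core of `[t1, t2]` but in no temporal `k`-core
of a window properly contained in `[t1, t2]`. -/
def MinCoreWindow (G : TemporalGraph V) (k : ℕ) (e : V × V × ℤ)
    (t1 t2 : ℤ) : Prop :=
  e ∈ G.tCore k t1 t2 ∧
  ∀ ts' te', t1 ≤ ts' → te' ≤ t2 → (ts', te') ≠ (t1, t2) →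
    e ∉ G.tCore k ts' te'

/-!
Let `[t1, t2]` be a minimal core window of `e`. If no edge of the temporal core of `[t1, t2]` had
timestamp `t1`, the `k`-core of `G_[t1,t2]` would still be `k`-dense in `G_[t1+1,t2]`, so `e` would
lie in the temporal core of the smaller window `[t1+1, t2]`. Hence some core edge `f` has timestamp
`t1`. Any window inside `[t1, t2]` whose core contains `f` starts at `t1`; if it ended before `t2`,
shrinking its end as far as possible would give `f` a minimal core window `[t1, t2']` with
`t2' < t2`, which is excluded.
-/

omit [Fintype V] in
theorem KDense.subset_kCore {G : SimpleGraph V} {k : ℕ} {S : Set V} (hS : KDense G k S) :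
    S ⊆ kCore G k :=
  Set.subset_sUnion_of_mem hS

theorem kDense_kCore (G : SimpleGraph V) (k : ℕ) : KDense G k (kCore G k) := by
  rintro v ⟨S, hS, hvS⟩
  calc k ≤ (S ∩ G.neighborSet v).ncard := hS v hvS
    _ ≤ (kCore G k ∩ G.neighborSet v).ncard :=
        Set.ncard_le_ncard (Set.inter_subset_inter_left _ hS.subset_kCore) (Set.toFinite _)

theorem KDense.of_adj {G H : SimpleGraph V} {k : ℕ} {S : Set V} (hS : KDense G k S)
    (hGH : ∀ v ∈ S, ∀ w ∈ S, G.Adj v w → H.Adj v w) : KDense H k S := by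
  intro v hv
  refine (hS v hv).trans (Set.ncard_le_ncard ?_ (Set.toFinite _))
  rintro w ⟨hw, hvw⟩
  exact ⟨hw, hGH v hv w hw hvw⟩

namespace TemporalGraph

omit [Fintype V] in
theorem proj_adj_succ {G : TemporalGraph V} {ts te : ℤ} {u v : V} (huv : (G.proj ts te).Adj u v)
    (hu : (u, v, ts) ∉ G.E) (hv : (v, u, ts) ∉ G.E) : (G.proj (ts + 1) te).Adj u v := by
  obtain ⟨t, hts, hte, ht⟩ := huv
  refine ⟨t, lt_of_le_of_ne hts ?_, hte, ht⟩
  rintro rfl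
  rcases ht with ht | ht
  exacts [hu ht, hv ht]

theorem tCore_subset_tCore_succ {G : TemporalGraph V} {k : ℕ} {ts te : ℤ}
    (h : ∀ f ∈ G.tCore k ts te, f.2.2 ≠ ts) : G.tCore k ts te ⊆ G.tCore k (ts + 1) te := by
  set S := kCore (G.proj ts te) k
  have hS : KDense (G.proj (ts + 1) te) k S := by
    refine (kDense_kCore _ k).of_adj fun v hv w hw hvw => ?_
    have hle : ts ≤ te := let ⟨_, h1, h2, _⟩ := hvw; h1.trans h2
    exact proj_adj_succ hvw (fun hE => h _ ⟨hE, le_rfl, hle, hv, hw⟩ rfl)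
      (fun hE => h _ ⟨hE, le_rfl, hle, hw, hv⟩ rfl)
  intro e he
  have hets := h e he
  obtain ⟨hE, hts, hte, hu, hv⟩ := he
  exact ⟨hE, lt_of_le_of_ne hts hets.symm, hte,
    hS.subset_kCore hu, hS.subset_kCore hv⟩

omit [Fintype V] in
theorem exists_minCoreWindow_of_mem_tCore {G : TemporalGraph V} {k : ℕ} {f : V × V × ℤ}
    {ts te : ℤ} (hft : f.2.2 = ts) (hf : f ∈ G.tCore k ts te) :
    ∃ u ≤ te, MinCoreWindow G k f ts u := by
  obtain ⟨u, hu, hleast⟩ := Int.exists_least_of_bdd (P := fun u => f ∈ G.tCore k ts u)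
    ⟨ts, fun z hz => hz.2.1.trans (hft ▸ hz.2.2.1)⟩ ⟨te, hf⟩
  refine ⟨u, hleast te hf, hu, fun a b ha hb hab habf => hab ?_⟩
  obtain rfl : a = ts := le_antisymm (hft ▸ habf.2.1) ha
  rw [le_antisymm hb (hleast b habf)]

end TemporalGraph

theorem MinCoreWindow.exists_mem_tCore_start {G : TemporalGraph V} {k : ℕ} {e : V × V × ℤ}
    {t1 t2 : ℤ} (he : MinCoreWindow G k e t1 t2) : ∃ f ∈ G.tCore k t1 t2, f.2.2 = t1 := by
  by_contra! hno
  exact he.2 (t1 + 1) t2 (by omega) le_rfl (by simp)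
    (TemporalGraph.tCore_subset_tCore_succ hno he.1)

theorem exists_edge_at_start_of_min_window_general (G : TemporalGraph V) (k : ℕ)
    (t1 t2 : ℤ)
    (h : ∃ e : V × V × ℤ, MinCoreWindow G k e t1 t2)
    (hmin : ∀ (e : V × V × ℤ) (t2' : ℤ),
      MinCoreWindow G k e t1 t2' → ¬ t2' < t2) :
    ∃ e : V × V × ℤ, e.2.2 = t1 ∧ MinCoreWindow G k e t1 t2 := by
  obtain ⟨e, he⟩ := h
  obtain ⟨f, hfC, hft⟩ := he.exists_mem_tCore_start
  refine ⟨f, hft, hfC, fun ts' te' hts' hte' hne hmem => ?_⟩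
  obtain rfl : ts' = t1 := le_antisymm (hft ▸ hmem.2.1) hts'
  have hte'_lt : te' < t2 := lt_of_le_of_ne hte' fun h => hne (h ▸ rfl)
  obtain ⟨u, hu, hfu⟩ := TemporalGraph.exists_minCoreWindow_of_mem_tCore hft hmem
  exact hmin f u hfu (hu.trans_lt hte'_lt)

theorem exists_edge_at_start_of_min_window (G : TemporalGraph V) (k : ℕ)
    (hk : 1 ≤ k) (t1 t2 : ℤ)
    (h : ∃ e : V × V × ℤ, MinCoreWindow G k e t1 t2)
    (hmin : ∀ (e : V × V × ℤ) (t2' : ℤ),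
      MinCoreWindow G k e t1 t2' → ¬ t2' < t2) :
    ∃ e : V × V × ℤ, e.2.2 = t1 ∧ MinCoreWindow G k e t1 t2 :=
  exists_edge_at_start_of_min_window_general G k t1 t2 h hmin
end

section
/- Let G be a temporal graph, k ≥ 1 an integer, and ts < te timestamps. If no temporal edge of G has a minimal core window [t1,te] with ts ≤ t1 (i.e., a minimal core window contained in [ts,te] that ends exactly at te), then C_[ts,te] = C_[ts,te-1]. -/
variable {V : Type*} [Fintype V]

/- `C_[ts,te-1] ⊆ C_[ts,te]` because the temporal core only grows with the window.
Conversely, an edge of `C_[ts,te]` missing from `C_[ts,te-1]` has a minimal core window ending at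
`te`: take the latest start `t1 ≥ ts` with the edge still in `C_[t1,te]`. Shrinking that window from
the left loses the edge by maximality of `t1`, and shrinking it from the right lands inside
`[ts,te-1]`, where the edge is already absent. -/

lemma kCore_mono {G G' : SimpleGraph V} (h : G ≤ G') (k : ℕ) : kCore G k ⊆ kCore G' k := by
  rintro v ⟨S, hS, hvS⟩
  refine ⟨S, fun w hw => (hS w hw).trans ?_, hvS⟩
  exact Set.ncard_le_ncard (Set.inter_subset_inter_right _ fun _ hx => h hx) (Set.toFinite _)

namespace TemporalGraph

variable (G : TemporalGraph V) (k : ℕ)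

lemma tCore_mono {ts te ts' te' : ℤ} (hs : ts ≤ ts') (he : te' ≤ te) :
    G.tCore k ts' te' ⊆ G.tCore k ts te := by
  rintro e ⟨hE, hts, hte, hu, hv⟩
  have hproj : G.proj ts' te' ≤ G.proj ts te := fun _ _ ⟨t, hst, hte', ht⟩ =>
    ⟨t, hs.trans hst, hte'.trans he, ht⟩
  exact ⟨hE, hs.trans hts, hte.trans he, kCore_mono hproj k hu, kCore_mono hproj k hv⟩

lemma exists_minCoreWindow_of_mem_tCore_of_not_mem_pred {e : V × V × ℤ} {ts te : ℤ}
    (he : e ∈ G.tCore k ts te) (he' : e ∉ G.tCore k ts (te - 1)) :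
    ∃ t1, ts ≤ t1 ∧ MinCoreWindow G k e t1 te := by
  obtain ⟨t1, ⟨hts, ht1⟩, hlatest⟩ : ∃ t1, (ts ≤ t1 ∧ e ∈ G.tCore k t1 te) ∧
      ∀ z, ts ≤ z ∧ e ∈ G.tCore k z te → z ≤ t1 :=
    Int.exists_greatest_of_bdd ⟨e.2.2, fun _ hz => hz.2.2.1⟩ ⟨ts, le_rfl, he⟩
  refine ⟨t1, hts, ht1, fun ts' te' hs hte hne hmem => ?_⟩
  rcases hte.lt_or_eq with hlt | rfl
  · exact he' (G.tCore_mono k (hts.trans hs) (Int.le_sub_one_of_lt hlt) hmem)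
  · exact hne (by rw [le_antisymm (hlatest ts' ⟨hts.trans hs, hmem⟩) hs])

end TemporalGraph

theorem tCore_eq_pred_of_no_min_window_ending_at_general (G : TemporalGraph V)
    (k : ℕ) (ts te : ℤ)
    (hno : ∀ (e : V × V × ℤ) (t1 : ℤ), ts ≤ t1 →
      ¬ MinCoreWindow G k e t1 te) :
    G.tCore k ts te = G.tCore k ts (te - 1) := by
  refine Set.Subset.antisymm (fun e he => ?_)
    (G.tCore_mono k le_rfl (Int.sub_le_self te zero_le_one))
  by_contra he'
  obtain ⟨t1, hts, hmin⟩ := G.exists_minCoreWindow_of_mem_tCore_of_not_mem_pred k he he'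
  exact hno e t1 hts hmin

theorem tCore_eq_pred_of_no_min_window_ending_at (G : TemporalGraph V)
    (k : ℕ) (hk : 1 ≤ k) (ts te : ℤ) (hlt : ts < te)
    (hno : ∀ (e : V × V × ℤ) (t1 : ℤ), ts ≤ t1 →
      ¬ MinCoreWindow G k e t1 te) :
    G.tCore k ts te = G.tCore k ts (te - 1) :=
  tCore_eq_pred_of_no_min_window_ending_at_general G k ts te hno
end
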